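/- arXiv:2207.06972 — 5 statements merged into one kernel-verified Lean document; each statement's English description precedes it below -/
import Mathlib

section
/- Let d be a positive integer and let α be a real number with α > -d. For a real number r, the double series ∑_{n=1}^∞ ∑_{j=0}^∞ n^{d} · C(j+d-1, d-1) · 1/(n^r (d + 2j + α)^r) converges if and only if r > d + 1. -/
open Real

lemma aux_pnat_rpow (p : ℝ) : Summable (fun n : ℕ+ => (n : ℝ) ^ p) ↔ p < -1 := by
  rw [← Real.summable_nat_rpow (p := p)]
  constructor
  · intro h
    have h2 : Summable (fun n : ℕ => ((n + 1 : ℕ) : ℝ) ^ p) :=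
      h.comp_injective (i := fun n : ℕ => (⟨n + 1, n.succ_pos⟩ : ℕ+))
        (fun a b hab => by simpa using congrArg PNat.val hab)
    exact (summable_nat_add_iff 1).mp h2
  · intro h
    exact h.comp_injective (fun a b hab => PNat.coe_injective hab)

/-- For `d ≥ 1` and `α > -d`, the double series
`∑_{n=1}^∞ ∑_{j=0}^∞ n^d C(j+d-1, d-1) / (n^r (d + 2j + α)^r)`
converges if and only if `r > d + 1`. -/
theorem double_series_summable_iff (d : ℕ) (hd : 0 < d) (α : ℝ) (hα : α > -(d : ℝ)) (r : ℝ) :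
    Summable (fun p : ℕ+ × ℕ =>
      (p.1 : ℝ) ^ d * ((p.2 + d - 1).choose (d - 1) : ℝ) *
        (1 / ((p.1 : ℝ) ^ r * ((d : ℝ) + 2 * p.2 + α) ^ r))) ↔ r > d + 1 := by
  have hdα : (0:ℝ) < (d:ℝ) + α := by linarith
  set D : ℕ → ℝ := fun j => (d : ℝ) + 2 * j + α with hDdef
  have hD : ∀ j, 0 < D j := by
    intro j
    have : (0:ℝ) ≤ 2 * j := by positivity
    simp only [hDdef]; linarith
  set f : ℕ+ → ℝ := fun n => (n : ℝ) ^ ((d : ℝ) - r) with hfdef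
  set g : ℕ → ℝ := fun j => ((j + d - 1).choose (d - 1) : ℝ) / (D j) ^ r with hgdef
  have hterm : (fun p : ℕ+ × ℕ =>
      (p.1 : ℝ) ^ d * ((p.2 + d - 1).choose (d - 1) : ℝ) *
        (1 / ((p.1 : ℝ) ^ r * ((d : ℝ) + 2 * p.2 + α) ^ r))) = fun p => f p.1 * g p.2 := by
    funext p
    have hn : (0:ℝ) < (p.1 : ℝ) := by exact_mod_cast p.1.pos
    have hnr : ((p.1 : ℝ)) ^ r ≠ 0 := (Real.rpow_pos_of_pos hn r).ne'
    have hDr : (D p.2) ^ r ≠ 0 := (Real.rpow_pos_of_pos (hD p.2) r).ne'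
    simp only [hfdef, hgdef, hDdef]
    rw [Real.rpow_sub hn, ← Real.rpow_natCast (p.1 : ℝ) d]
    field_simp
  rw [hterm]
  have hfpos : ∀ n, 0 < f n := fun n =>
    Real.rpow_pos_of_pos (by exact_mod_cast n.pos) _
  constructor
  · intro h
    have h0 : Summable (fun n : ℕ+ => f n * g 0) :=
      h.comp_injective (i := fun n : ℕ+ => (n, 0))
        (fun a b hab => by simpa using congrArg Prod.fst hab)
    have hg0 : g 0 ≠ 0 := by
      have : ((0 + d - 1).choose (d - 1)) = 1 := by
        rw [Nat.zero_add]; exact Nat.choose_self _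
      simp only [hgdef, this]
      exact ne_of_gt (div_pos (by norm_num) (Real.rpow_pos_of_pos (hD 0) r))
    have hf : Summable f := by
      have := h0.mul_right (g 0)⁻¹
      simpa [mul_assoc, mul_inv_cancel₀ hg0] using this
    have := (aux_pnat_rpow ((d:ℝ) - r)).mp hf
    linarith
  · intro hr
    have hr0 : 0 ≤ r := by
      have : (0:ℝ) ≤ (d:ℝ) := by positivity
      linarith
    refine Summable.mul_of_nonneg ?_ ?_ (fun n => (hfpos n).le) ?_
    · exact (aux_pnat_rpow _).mpr (by linarith)
    · -- summability of g
      set ε : ℝ := min 1 ((d:ℝ) + α) with hεdef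
      have hε : 0 < ε := lt_min one_pos hdα
      set q : ℝ := ((d:ℝ) - 1) - r with hqdef
      set K : ℝ := (d:ℝ) ^ (d - 1) * (ε ^ r)⁻¹ with hKdef
      have htarget : Summable (fun j : ℕ => K * ((j:ℝ) + 1) ^ q) := by
        have hq : q < -1 := by
          have : (1:ℝ) ≤ (d:ℝ) := by exact_mod_cast hd
          simp only [hqdef]; linarith
        have h1 : Summable (fun j : ℕ => ((j + 1 : ℕ) : ℝ) ^ q) :=
          (summable_nat_add_iff 1).mpr (Real.summable_nat_rpow.mpr hq)
        have h2 : Summable (fun j : ℕ => ((j:ℝ) + 1) ^ q) := by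
          convert h1 using 2 with j; push_cast; ring_nf
        exact h2.mul_left K
      refine Summable.of_nonneg_of_le (fun j => ?_) (fun j => ?_) htarget
      · simp only [hgdef]
        exact div_nonneg (by positivity) (Real.rpow_nonneg (hD j).le r)
      ·
        have hj1 : (0:ℝ) < (j:ℝ) + 1 := by positivity
        have hnum : (((j + d - 1).choose (d - 1)) : ℝ) ≤ (d:ℝ) ^ (d-1) * ((j:ℝ)+1) ^ (d-1) := by
          have h1 : (j + d - 1).choose (d - 1) ≤ (j + d - 1) ^ (d - 1) :=
            Nat.choose_le_pow _ _
          have hjd : j ≤ d * j := Nat.le_mul_of_pos_left j hd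
          have hmul : d * (j + 1) = d * j + d := by ring
          have h2 : (j + d - 1) ^ (d - 1) ≤ (d * (j + 1)) ^ (d - 1) :=
            Nat.pow_le_pow_left (by omega) _
          calc (((j + d - 1).choose (d - 1)) : ℝ) ≤ ((d * (j + 1)) ^ (d - 1) : ℕ) := by
                exact_mod_cast h1.trans h2
            _ = (d:ℝ) ^ (d-1) * ((j:ℝ)+1) ^ (d-1) := by push_cast; rw [mul_pow]
        have hεj : ε * ((j:ℝ) + 1) ≤ D j := by
          have h1 : ε ≤ 1 := min_le_left _ _
          have h2 : ε ≤ (d:ℝ) + α := min_le_right _ _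
          have hj0 : (0:ℝ) ≤ (j:ℝ) := by positivity
          have : ε * ((j:ℝ) + 1) ≤ 1 * (j:ℝ) + ((d:ℝ) + α) := by nlinarith
          simp only [hDdef]; linarith
        have hden : (ε * ((j:ℝ)+1)) ^ r ≤ (D j) ^ r :=
          Real.rpow_le_rpow (by positivity) hεj hr0
        have hstep : g j ≤ ((d:ℝ) ^ (d-1) * ((j:ℝ)+1) ^ (d-1)) / (ε * ((j:ℝ)+1)) ^ r := by
          simp only [hgdef]
          exact div_le_div₀ (by positivity) hnum (by positivity) hden
        refine hstep.trans (le_of_eq ?_)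
        have hcast : (((d:ℕ) - 1 : ℕ) : ℝ) = (d:ℝ) - 1 := by
          have : 1 ≤ d := hd
          push_cast [this]; ring
        rw [hKdef, hqdef, Real.mul_rpow hε.le hj1.le,
          ← Real.rpow_natCast ((j:ℝ)+1) (d-1), hcast]
        rw [show ((d:ℝ) - 1) - r = ((d:ℝ) - 1) + (-r) from by ring, Real.rpow_add hj1,
          Real.rpow_neg hj1.le]
        rw [div_eq_mul_inv, mul_inv]
        ring
    · exact fun j => div_nonneg (by positivity) (Real.rpow_nonneg (hD j).le r)
end

section
/- Let d be a positive integer, c > 0 and L > 0 real numbers, α a real number with -d < α < d, and Λ a full-rank ℤ-lattice in ℝ^{2d}. For any real r ≥ 1, the series ∑_{n ∈ ℤ \ {0}} ∑_{j=0}^∞ |n|^d · L · C(j+d-1, d-1) · (2c/(π|n|(d + 2j - α·sgn(n))))^r + ∑_{ξ ∈ Λ \ {0}} (2/π)^r · 1/‖ξ‖^{2r} converges if and only if r > d + 1. (This says that the Schatten r-norm of the Green operator G_α on a compact Heisenberg manifold is finite if and only if r > d + 1.) -/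
open Real

/-!
With `ε = min (d - |α|) 1` one has `d + 2j - α sgn n ≥ ε (j + 1)` and
`C(j+d-1, d-1) ≤ (j + 1)^(d-1)`, so the Heisenberg terms are bounded by a constant times
`|n|^(d-r) (j + 1)^(d-1-r)`, a product of two convergent `p`-series once `r > d + 1`.
Conversely, the terms with `j = 0` and `n > 0` are a constant multiple of `n^(d-r)`, which
forces `r > d + 1`. The lattice part is the `p`-series `∑ ‖ξ‖^(-2r)` over a discrete subgroup
of `ℝ^(2d)`, which converges as soon as `2r > 2d`.
-/

section Lattice

variable {E : Type*} [NormedAddCommGroup E] [NormedSpace ℝ E] [FiniteDimensional ℝ E]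

theorem ZLattice.finrank_le_of_discrete (L : Submodule ℤ E) [DiscreteTopology L] :
    Module.finrank ℤ L ≤ Module.finrank ℝ E := by
  have : DiscreteTopology (Submodule.span ℤ (L : Set E)) := by
    rwa [Submodule.span_eq]
  have h := Real.finrank_eq_int_finrank_of_discrete this
  rw [Set.finrank, Set.finrank, Submodule.span_eq] at h
  exact h ▸ Submodule.finrank_le _

theorem AddSubgroup.summable_one_div_norm_rpow (Λ : AddSubgroup E) [DiscreteTopology Λ] {s : ℝ}
    (hs : Module.finrank ℝ E < s) :
    Summable fun ξ : {x : Λ // x ≠ 0} => 1 / ‖((ξ : Λ) : E)‖ ^ s := by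
  have : DiscreteTopology Λ.toIntSubmodule := ‹DiscreteTopology Λ›
  have hrank : (Module.finrank ℤ Λ.toIntSubmodule : ℝ) ≤ Module.finrank ℝ E := by
    exact_mod_cast ZLattice.finrank_le_of_discrete Λ.toIntSubmodule
  have h := ZLattice.summable_norm_rpow Λ.toIntSubmodule (-s) (by linarith)
  let i : {x : Λ // x ≠ 0} → Λ.toIntSubmodule := fun ξ => ⟨ξ.1, ξ.1.2⟩
  have hi : Function.Injective i := fun a b hab =>
    Subtype.ext (Subtype.ext (congrArg (fun x : Λ.toIntSubmodule => (x : E)) hab))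
  refine (h.comp_injective hi).congr fun ξ => ?_
  exact (Real.rpow_neg (norm_nonneg ((ξ : Λ) : E)) s).trans (one_div _).symm

end Lattice

theorem Nat.add_choose_le_succ_pow (j k : ℕ) : (j + k).choose k ≤ (j + 1) ^ k := by
  induction k with
  | zero => simp
  | succ k ih =>
    refine Nat.le_of_mul_le_mul_right (c := k + 1) ?_ k.succ_pos
    calc (j + (k + 1)).choose (k + 1) * (k + 1) = (j + k + 1) * (j + k).choose k :=
          (Nat.add_one_mul_choose_eq (j + k) k).symm
      _ ≤ ((j + 1) * (k + 1)) * (j + 1) ^ k := Nat.mul_le_mul (by nlinarith) ih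
      _ = (j + 1) ^ (k + 1) * (k + 1) := by ring

theorem Real.summable_nat_add_one_rpow_iff {p : ℝ} :
    Summable (fun j : ℕ => ((j : ℝ) + 1) ^ p) ↔ p < -1 := by
  simpa using (summable_nat_add_iff (f := fun n : ℕ => (n : ℝ) ^ p) 1).trans summable_nat_rpow

theorem mul_intCast_sign_le_abs (α : ℝ) (n : ℤ) : α * (n.sign : ℝ) ≤ |α| := by
  rcases Int.sign_trichotomy n with h | h | h <;> simp [h, le_abs_self, neg_le_abs]

namespace Heisenberg

def level (d : ℕ) (α : ℝ) (n : ℤ) (j : ℕ) : ℝ := (d : ℝ) + 2 * j - α * (n.sign : ℝ)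

noncomputable def schattenTerm (d : ℕ) (c L α r : ℝ) (p : {n : ℤ // n ≠ 0} × ℕ) : ℝ :=
  |((p.1 : ℤ) : ℝ)| ^ d * L * ((p.2 + d - 1).choose (d - 1) : ℝ) *
    (2 * c / (π * |((p.1 : ℤ) : ℝ)| * level d α p.1 p.2)) ^ r

variable {d : ℕ} {c L α r : ℝ}

theorem min_mul_le_level (n : ℤ) (j : ℕ) :
    min ((d : ℝ) - |α|) 1 * (j + 1) ≤ level d α n j := by
  have hsign := mul_intCast_sign_le_abs α n
  have hε₁ := min_le_left ((d : ℝ) - |α|) 1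
  have hε₂ := min_le_right ((d : ℝ) - |α|) 1
  unfold level
  nlinarith [(j.cast_nonneg : (0 : ℝ) ≤ j)]

theorem level_pos (hα : |α| < d) (n : ℤ) (j : ℕ) : 0 < level d α n j :=
  lt_of_lt_of_le (by have := sub_pos.2 hα; positivity) (min_mul_le_level n j)

theorem schattenTerm_eq (hc : 0 ≤ c) (n : {n : ℤ // n ≠ 0}) (j : ℕ)
    (hD : 0 < level d α n j) :
    schattenTerm d c L α r (n, j) = L * (2 * c / π) ^ r * |((n : ℤ) : ℝ)| ^ ((d : ℝ) - r) *
      (((j + d - 1).choose (d - 1) : ℝ) / level d α n j ^ r) := by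
  have hn : 0 < |((n : ℤ) : ℝ)| := abs_pos.2 (Int.cast_ne_zero.2 n.2)
  have hsplit : 2 * c / (π * |((n : ℤ) : ℝ)| * level d α n j) =
      2 * c / π / (|((n : ℤ) : ℝ)| * level d α n j) := by
    rw [mul_assoc, div_div]
  rw [schattenTerm, hsplit, Real.div_rpow (by positivity) (by positivity),
    Real.mul_rpow hn.le hD.le, Real.rpow_sub hn, Real.rpow_natCast]
  field_simp

theorem schattenTerm_nonneg (hc : 0 ≤ c) (hL : 0 ≤ L) (hα : |α| < d)
    (p : {n : ℤ // n ≠ 0} × ℕ) :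
    0 ≤ schattenTerm d c L α r p := by
  have hD := level_pos hα p.1 p.2
  exact mul_nonneg (by positivity) (Real.rpow_nonneg (by positivity) r)

theorem choose_div_level_rpow_le (hα : |α| < d) (hr : 0 ≤ r) (n : ℤ) (j : ℕ) :
    ((j + d - 1).choose (d - 1) : ℝ) / level d α n j ^ r ≤
      min ((d : ℝ) - |α|) 1 ^ (-r) * ((j : ℝ) + 1) ^ (((d - 1 : ℕ) : ℝ) - r) := by
  set ε := min ((d : ℝ) - |α|) 1
  have hε : 0 < ε := lt_min (sub_pos.2 hα) one_pos
  have hj : (0 : ℝ) < j + 1 := by positivity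
  have hchoose : ((j + d - 1).choose (d - 1) : ℝ) ≤ ((j : ℝ) + 1) ^ (d - 1) := by
    exact_mod_cast (Nat.choose_le_choose _ (by omega)).trans (Nat.add_choose_le_succ_pow j (d - 1))
  calc _ ≤ ((j : ℝ) + 1) ^ (d - 1) / (ε * (j + 1)) ^ r := by
        gcongr
        exact min_mul_le_level n j
    _ = _ := by
        rw [Real.mul_rpow hε.le hj.le, Real.rpow_sub hj, Real.rpow_natCast, Real.rpow_neg hε.le]
        field_simp

theorem lt_of_summable_schattenTerm (hc : 0 < c) (hL : 0 < L) (hα : α < d)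
    (h : Summable (schattenTerm d c L α r)) : (d : ℝ) + 1 < r := by
  let i : ℕ → {n : ℤ // n ≠ 0} × ℕ := fun m => (⟨m + 1, by omega⟩, 0)
  have hi : Function.Injective i := fun a b hab => by
    simpa [i] using congrArg (fun p => (p.1 : ℤ)) hab
  have hlevel : ∀ m, level d α (i m).1 0 = d - α := fun m => by
    simp [level, i, Int.sign_eq_one_of_pos (by omega : (0 : ℤ) < m + 1)]
  have hterm : ∀ m, schattenTerm d c L α r (i m) =
      L * (2 * c / π) ^ r * (1 / (d - α) ^ r) * ((m : ℝ) + 1) ^ ((d : ℝ) - r) := fun m => by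
    rw [schattenTerm_eq hc.le _ _ ((hlevel m).symm ▸ sub_pos.2 hα), hlevel]
    simp only [Int.cast_add, Int.cast_natCast, Int.cast_one, zero_add, Nat.choose_self,
      Nat.cast_one, one_div, abs_of_pos (by positivity : (0 : ℝ) < m + 1)]
    ring
  have hK : L * (2 * c / π) ^ r * (1 / (d - α) ^ r) ≠ 0 := by
    have := sub_pos.2 hα
    positivity
  have hpow := (summable_mul_left_iff hK).1 ((h.comp_injective hi).congr hterm)
  linarith [Real.summable_nat_add_one_rpow_iff.1 hpow]

theorem summable_schattenTerm (hc : 0 ≤ c) (hL : 0 ≤ L) (hα : |α| < d)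
    (hr : (d : ℝ) + 1 < r) :
    Summable (schattenTerm d c L α r) := by
  have hr0 : 0 ≤ r := by linarith [(d.cast_nonneg : (0 : ℝ) ≤ d)]
  have hf : Summable fun n : {n : ℤ // n ≠ 0} => |((n : ℤ) : ℝ)| ^ ((d : ℝ) - r) := by
    have := summable_abs_int_rpow (b := r - d) (by linarith)
    rw [neg_sub] at this
    exact this.comp_injective Subtype.val_injective
  have hg : Summable fun j : ℕ => ((j : ℝ) + 1) ^ (((d - 1 : ℕ) : ℝ) - r) := by
    have : ((d - 1 : ℕ) : ℝ) ≤ d := by exact_mod_cast d.sub_le 1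
    exact Real.summable_nat_add_one_rpow_iff.2 (by linarith)
  have hfg := (hf.mul_of_nonneg hg (fun _ => by positivity) (fun _ => by positivity)).mul_left
    (L * (2 * c / π) ^ r * min ((d : ℝ) - |α|) 1 ^ (-r))
  refine hfg.of_nonneg_of_le (schattenTerm_nonneg hc hL hα) fun ⟨n, j⟩ => ?_
  rw [schattenTerm_eq hc n j (level_pos hα n j)]
  calc _ ≤ L * (2 * c / π) ^ r * |((n : ℤ) : ℝ)| ^ ((d : ℝ) - r) *
        (min ((d : ℝ) - |α|) 1 ^ (-r) * ((j : ℝ) + 1) ^ (((d - 1 : ℕ) : ℝ) - r)) := by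
        gcongr
        exact choose_div_level_rpow_le hα hr0 n j
    _ = _ := by ring

end Heisenberg

theorem schatten_green_summable_iff_general (d : ℕ) (c L : ℝ) (hc : 0 < c) (hL : 0 < L)
    (α : ℝ) (hα : -(d : ℝ) < α) (hα' : α < d)
    (Λ : AddSubgroup (EuclideanSpace ℝ (Fin (2 * d))))
    (hdisc : DiscreteTopology Λ)
    (r : ℝ) :
    Summable (Sum.elim
      (fun p : {n : ℤ // n ≠ 0} × ℕ =>
        |((p.1 : ℤ) : ℝ)| ^ d * L * ((p.2 + d - 1).choose (d - 1) : ℝ) *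
          (2 * c / (π * |((p.1 : ℤ) : ℝ)| *
            ((d : ℝ) + 2 * p.2 - α * ((p.1 : ℤ).sign : ℝ)))) ^ r)
      (fun ξ : {x : Λ // x ≠ 0} =>
        (2 / π) ^ r * (1 / ‖((ξ : Λ) : EuclideanSpace ℝ (Fin (2 * d)))‖ ^ (2 * r)))) ↔
      r > d + 1 := by
  refine ⟨fun h => Heisenberg.lt_of_summable_schattenTerm hc hL hα'
    (h.comp_injective Sum.inl_injective), fun hr => ?_⟩
  have hlattice : Summable fun ξ : {x : Λ // x ≠ 0} =>
      1 / ‖((ξ : Λ) : EuclideanSpace ℝ (Fin (2 * d)))‖ ^ (2 * r) :=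
    Λ.summable_one_div_norm_rpow (by rw [finrank_euclideanSpace_fin]; push_cast; linarith)
  have hheisenberg := Heisenberg.summable_schattenTerm hc.le hL.le (abs_lt.2 ⟨hα, hα'⟩) hr
  exact Summable.sum _ hheisenberg (hlattice.mul_left _)

/-- Schatten norm characterization for the Green operator `G_α`, `-d < α < d`:
the series of `r`-th powers of the reciprocals of the nonzero eigenvalues of `L_α`,
counted with multiplicity, converges iff `r > d + 1`. -/
theorem schatten_green_summable_iff (d : ℕ) (hd : 0 < d) (c L : ℝ) (hc : 0 < c) (hL : 0 < L)
    (α : ℝ) (hα : -(d : ℝ) < α) (hα' : α < d)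
    (Λ : AddSubgroup (EuclideanSpace ℝ (Fin (2 * d))))
    (hdisc : DiscreteTopology Λ)
    (hspan : Submodule.span ℝ (Λ : Set (EuclideanSpace ℝ (Fin (2 * d)))) = ⊤)
    (r : ℝ) (hr : 1 ≤ r) :
    Summable (Sum.elim
      (fun p : {n : ℤ // n ≠ 0} × ℕ =>
        |((p.1 : ℤ) : ℝ)| ^ d * L * ((p.2 + d - 1).choose (d - 1) : ℝ) *
          (2 * c / (π * |((p.1 : ℤ) : ℝ)| *
            ((d : ℝ) + 2 * p.2 - α * ((p.1 : ℤ).sign : ℝ)))) ^ r)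
      (fun ξ : {x : Λ // x ≠ 0} =>
        (2 / π) ^ r * (1 / ‖((ξ : Λ) : EuclideanSpace ℝ (Fin (2 * d)))‖ ^ (2 * r)))) ↔
      r > d + 1 :=
  schatten_green_summable_iff_general d c L hc hL α hα hα' Λ hdisc r
end

section
/- Let d be a positive integer, c > 0 a real number, α a real number with -d < α < d, Λ a full-rank ℤ-lattice in ℝ^{2d}, and s a real number. Then the family of real numbers consisting of (1 + (π|n|/(2c))(d + 2j) + (π²/(4c²))n²)^{s/2} / ((π|n|/(2c))(d + 2j - α·sgn(n))) for all nonzero integers n and integers j ≥ 0, together with (1 + (π/2)‖ξ‖²)^{s/2} / ((π/2)‖ξ‖²) for all ξ ∈ Λ \ {0}, is bounded above if and only if s ≤ 1. -/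
/-!
For `s ≤ 1` every ratio is at most `√(1 + μ) / λ`, and `√(1 + μ) ≤ 1 + w ≤ C w` once `w` is bounded
below by a positive constant. For type (a), with `u = π|n|/(2c)` we have `μ = u(d + 2j) + u²`, and
`w = u(d + 2j) ≥ πd/(2c)` is comparable to `λ = u(d + 2j - α sgn n) ≥ (1 - |α|/d) w` because
`|α| < d`. For type (b), `w = λ = (π/2)‖ξ‖²` is bounded below since a discrete subgroup has a
minimal nonzero norm. Conversely, for `n = k → ∞` and `j = 0` the ratio is at least
`u^(s-1)/(d - α)`, which is unbounded when `s > 1`.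
-/

open Real Filter

lemma rpow_half_div_le_of_sqrt_le {x l K s : ℝ} (hs : s ≤ 1) (hx : 1 ≤ x) (hl : 0 < l)
    (h : √x ≤ K * l) : x ^ (s / 2) / l ≤ K := by
  rw [div_le_iff₀ hl]
  calc x ^ (s / 2) ≤ x ^ (1 / 2 : ℝ) := rpow_le_rpow_of_exponent_le hx (by linarith)
    _ = √x := (sqrt_eq_rpow x).symm
    _ ≤ K * l := h

lemma one_add_le_inv_add_one_mul {w w₀ : ℝ} (hw₀ : 0 < w₀) (hw : w₀ ≤ w) :
    1 + w ≤ (w₀⁻¹ + 1) * w := by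
  have : 1 ≤ w₀⁻¹ * w := by rwa [inv_mul_eq_div, one_le_div hw₀]
  linarith

lemma sqrt_one_add_add_sq_le {u w : ℝ} (hu : 0 ≤ u) (huw : u ≤ w) :
    √(1 + w + u ^ 2) ≤ 1 + w :=
  (sqrt_le_left (by linarith)).mpr (by nlinarith)

lemma rpow_half_div_le_inv_add_one {z z₀ s : ℝ} (hs : s ≤ 1) (hz₀ : 0 < z₀) (hz : z₀ ≤ z) :
    (1 + z) ^ (s / 2) / z ≤ z₀⁻¹ + 1 := by
  refine rpow_half_div_le_of_sqrt_le hs (by linarith) (hz₀.trans_le hz) ?_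
  calc √(1 + z) ≤ 1 + z := sqrt_le_self_iff.mpr (Or.inr (by linarith))
    _ ≤ (z₀⁻¹ + 1) * z := one_add_le_inv_add_one_mul hz₀ hz

lemma rpow_half_div_mul_sub_le {u u₀ m d α σ s : ℝ} (hs : s ≤ 1) (hu₀ : 0 < u₀) (hu : u₀ ≤ u)
    (hd : 1 ≤ d) (hm : d ≤ m) (hα : |α| < d) (hσ : |σ| ≤ 1) :
    (1 + u * m + u ^ 2) ^ (s / 2) / (u * (m - α * σ)) ≤ ((u₀ * d)⁻¹ + 1) * (d / (d - |α|)) := by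
  have hu' : 0 < u := hu₀.trans_le hu
  have hασ : α * σ ≤ |α| :=
    (le_abs_self _).trans (by rw [abs_mul]; exact mul_le_of_le_one_right (abs_nonneg α) hσ)
  have hdα : 0 < d - |α| := by linarith
  have hm_le : (d - |α|) * m ≤ d * (m - α * σ) := by nlinarith [abs_nonneg α]
  refine rpow_half_div_le_of_sqrt_le hs (by nlinarith) (by nlinarith) ?_
  calc √(1 + u * m + u ^ 2) ≤ 1 + u * m := sqrt_one_add_add_sq_le hu'.le (by nlinarith)
    _ ≤ ((u₀ * d)⁻¹ + 1) * (u * m) := one_add_le_inv_add_one_mul (by positivity) (by nlinarith)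
    _ ≤ ((u₀ * d)⁻¹ + 1) * (d / (d - |α|) * (u * (m - α * σ))) := by
      refine mul_le_mul_of_nonneg_left ?_ (by positivity)
      rw [div_mul_eq_mul_div, le_div_iff₀ hdα]
      nlinarith
    _ = _ := by ring

lemma rpow_sub_one_div_le {u d α s : ℝ} (hu : 0 < u) (hd : 0 ≤ d) (hα : α < d) (hs : 0 ≤ s) :
    u ^ (s - 1) / (d - α) ≤ (1 + u * d + u ^ 2) ^ (s / 2) / (u * (d - α)) := by
  have hdα : 0 < d - α := by linarith
  have hsq : u ^ s = (u ^ 2) ^ (s / 2) := by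
    rw [← rpow_natCast, ← rpow_mul hu.le]; ring_nf
  rw [rpow_sub_one hu.ne', div_div, hsq]
  gcongr
  nlinarith

lemma AddSubgroup.exists_pos_forall_le_norm {E : Type*} [SeminormedAddCommGroup E]
    (Λ : AddSubgroup E) [DiscreteTopology Λ] : ∃ ε > 0, ∀ x : Λ, x ≠ 0 → ε ≤ ‖(x : E)‖ := by
  obtain ⟨ε, hε, h⟩ := Metric.isOpen_singleton_iff.mp
    (discreteTopology_iff_isOpen_singleton_zero.mp ‹DiscreteTopology Λ›)
  exact ⟨ε, hε, fun x hx => by simpa [dist_eq_norm] using mt (h x) hx⟩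

lemma bddAbove_range_rpow_half_div_norm_sq {E : Type*} [SeminormedAddCommGroup E]
    (Λ : AddSubgroup E) [DiscreteTopology Λ] {a s : ℝ} (ha : 0 < a) (hs : s ≤ 1) :
    BddAbove (Set.range fun ξ : {x : Λ // x ≠ 0} =>
      (1 + a * ‖((ξ : Λ) : E)‖ ^ 2) ^ (s / 2) / (a * ‖((ξ : Λ) : E)‖ ^ 2)) := by
  obtain ⟨ε, hε, hΛ⟩ := Λ.exists_pos_forall_le_norm
  refine ⟨(a * ε ^ 2)⁻¹ + 1, ?_⟩
  rintro _ ⟨⟨x, hx⟩, rfl⟩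
  exact rpow_half_div_le_inv_add_one hs (by positivity) (by gcongr; exact hΛ x hx)

noncomputable def heisenbergRatio (c d α s : ℝ) (n : ℤ) (j : ℕ) : ℝ :=
  (1 + π * |(n : ℝ)| / (2 * c) * (d + 2 * j) + π ^ 2 / (4 * c ^ 2) * (n : ℝ) ^ 2) ^ (s / 2) /
    (π * |(n : ℝ)| / (2 * c) * (d + 2 * j - α * (n.sign : ℝ)))

section heisenbergRatio

variable {c d α s : ℝ}

lemma heisenbergRatio_eq (n : ℤ) (j : ℕ) :
    heisenbergRatio c d α s n j =
      (1 + π * |(n : ℝ)| / (2 * c) * (d + 2 * j) + (π * |(n : ℝ)| / (2 * c)) ^ 2) ^ (s / 2) /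
        (π * |(n : ℝ)| / (2 * c) * (d + 2 * j - α * (n.sign : ℝ))) := by
  have hsq : π ^ 2 / (4 * c ^ 2) * (n : ℝ) ^ 2 = (π * |(n : ℝ)| / (2 * c)) ^ 2 := by
    rw [div_pow, mul_pow, sq_abs]; ring
  rw [heisenbergRatio, hsq]

lemma heisenbergRatio_le (hc : 0 < c) (hd : 1 ≤ d) (hα : |α| < d) (hs : s ≤ 1) {n : ℤ}
    (hn : n ≠ 0) (j : ℕ) :
    heisenbergRatio c d α s n j ≤ ((π / (2 * c) * d)⁻¹ + 1) * (d / (d - |α|)) := by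
  rw [heisenbergRatio_eq]
  refine rpow_half_div_mul_sub_le hs (by positivity) ?_ hd (by simp) hα ?_
  · have : (1 : ℝ) ≤ |(n : ℝ)| := by exact_mod_cast Int.one_le_abs hn
    gcongr
    exact le_mul_of_one_le_right pi_pos.le this
  · rcases Int.sign_trichotomy n with h | h | h <;> simp [h]

lemma bddAbove_range_heisenbergRatio (hc : 0 < c) (hd : 1 ≤ d) (hα : |α| < d) (hs : s ≤ 1) :
    BddAbove (Set.range fun p : {n : ℤ // n ≠ 0} × ℕ => heisenbergRatio c d α s p.1 p.2) :=
  ⟨_, Set.forall_mem_range.2 fun p => heisenbergRatio_le hc hd hα hs p.1.2 p.2⟩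

lemma rpow_sub_one_le_heisenbergRatio (hc : 0 < c) (hd : 0 ≤ d) (hα : α < d) (hs : 0 ≤ s)
    (k : ℕ) :
    (π * (k + 1) / (2 * c)) ^ (s - 1) / (d - α) ≤ heisenbergRatio c d α s (k + 1) 0 := by
  have habs : |((k + 1 : ℤ) : ℝ)| = k + 1 := by push_cast; exact abs_of_pos k.cast_add_one_pos
  have hsign : (((k + 1 : ℤ).sign : ℤ) : ℝ) = 1 := by
    rw [Int.sign_eq_one_of_pos (by omega), Int.cast_one]
  rw [heisenbergRatio_eq, habs, hsign]
  simpa using rpow_sub_one_div_le (by positivity) hd hα hs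

lemma not_bddAbove_range_heisenbergRatio (hc : 0 < c) (hd : 0 ≤ d) (hα : α < d) (hs : 1 < s) :
    ¬ BddAbove (Set.range fun p : {n : ℤ // n ≠ 0} × ℕ => heisenbergRatio c d α s p.1 p.2) := by
  have hk : Tendsto (fun k : ℕ => (k : ℝ) + 1) atTop atTop :=
    tendsto_natCast_atTop_atTop.atTop_add tendsto_const_nhds
  have hu : Tendsto (fun k : ℕ => π * (k + 1) / (2 * c)) atTop atTop :=
    (hk.const_mul_atTop pi_pos).atTop_div_const (by positivity)
  have hlower : Tendsto (fun k : ℕ => (π * (k + 1) / (2 * c)) ^ (s - 1) / (d - α)) atTop atTop :=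
    ((tendsto_rpow_atTop (by linarith)).comp hu).atTop_div_const (by linarith)
  have hratio : Tendsto (fun k : ℕ => heisenbergRatio c d α s (k + 1) 0) atTop atTop :=
    tendsto_atTop_mono (rpow_sub_one_le_heisenbergRatio hc hd hα (by linarith)) hlower
  refine fun hbdd => not_bddAbove_of_tendsto_atTop hratio (hbdd.mono ?_)
  rintro _ ⟨k, rfl⟩
  exact ⟨(⟨k + 1, by omega⟩, 0), rfl⟩

end heisenbergRatio

theorem ratio_family_bddAbove_iff_general (d : ℕ) (hd : 0 < d) (c : ℝ) (hc : 0 < c)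
    (α : ℝ) (hα : -(d : ℝ) < α) (hα' : α < d)
    (Λ : AddSubgroup (EuclideanSpace ℝ (Fin (2 * d))))
    (hdisc : DiscreteTopology Λ)
    (s : ℝ) :
    BddAbove
      ((Set.range fun p : {n : ℤ // n ≠ 0} × ℕ =>
          (1 + π * |((p.1 : ℤ) : ℝ)| / (2 * c) * ((d : ℝ) + 2 * p.2) +
              π ^ 2 / (4 * c ^ 2) * ((p.1 : ℤ) : ℝ) ^ 2) ^ (s / 2) /
            (π * |((p.1 : ℤ) : ℝ)| / (2 * c) *
              ((d : ℝ) + 2 * p.2 - α * ((p.1 : ℤ).sign : ℝ)))) ∪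
        (Set.range fun ξ : {x : Λ // x ≠ 0} =>
          (1 + π / 2 * ‖((ξ : Λ) : EuclideanSpace ℝ (Fin (2 * d)))‖ ^ 2) ^ (s / 2) /
            (π / 2 * ‖((ξ : Λ) : EuclideanSpace ℝ (Fin (2 * d)))‖ ^ 2))) ↔ s ≤ 1 := by
  constructor
  · intro hbdd
    by_contra! hs
    exact not_bddAbove_range_heisenbergRatio hc d.cast_nonneg hα' hs
      (hbdd.mono Set.subset_union_left)
  · intro hs
    have hd₁ : (1 : ℝ) ≤ d := by exact_mod_cast hd
    exact (bddAbove_range_heisenbergRatio hc hd₁ (abs_lt.mpr ⟨hα, hα'⟩) hs).union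
      (bddAbove_range_rpow_half_div_norm_sq Λ (by positivity) hs)

/-- For `-d < α < d`, the full family of eigenvalue ratios `(1 + μ_ℓ)^{s/2} / λ_ℓ`
(type (a) together with type (b)) is bounded above iff `s ≤ 1`. -/
theorem ratio_family_bddAbove_iff (d : ℕ) (hd : 0 < d) (c : ℝ) (hc : 0 < c)
    (α : ℝ) (hα : -(d : ℝ) < α) (hα' : α < d)
    (Λ : AddSubgroup (EuclideanSpace ℝ (Fin (2 * d))))
    (hdisc : DiscreteTopology Λ)
    (hspan : Submodule.span ℝ (Λ : Set (EuclideanSpace ℝ (Fin (2 * d)))) = ⊤)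
    (s : ℝ) :
    BddAbove
      ((Set.range fun p : {n : ℤ // n ≠ 0} × ℕ =>
          (1 + π * |((p.1 : ℤ) : ℝ)| / (2 * c) * ((d : ℝ) + 2 * p.2) +
              π ^ 2 / (4 * c ^ 2) * ((p.1 : ℤ) : ℝ) ^ 2) ^ (s / 2) /
            (π * |((p.1 : ℤ) : ℝ)| / (2 * c) *
              ((d : ℝ) + 2 * p.2 - α * ((p.1 : ℤ).sign : ℝ)))) ∪
        (Set.range fun ξ : {x : Λ // x ≠ 0} =>
          (1 + π / 2 * ‖((ξ : Λ) : EuclideanSpace ℝ (Fin (2 * d)))‖ ^ 2) ^ (s / 2) /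
            (π / 2 * ‖((ξ : Λ) : EuclideanSpace ℝ (Fin (2 * d)))‖ ^ 2))) ↔ s ≤ 1 :=
  ratio_family_bddAbove_iff_general d hd c hc α hα hα' Λ hdisc s
end

section
/- Let d be a positive integer, c > 0 a real number, α a real number with -d < α < d, Λ a full-rank ℤ-lattice in ℝ^{2d}, and ξ₀ a nonzero element of Λ of minimal Euclidean norm. Then the supremum of the family of real numbers consisting of (1 + (π|n|/(2c))(d + 2j) + (π²/(4c²))n²)^{1/2} / ((π|n|/(2c))(d + 2j - α·sgn(n))) for all nonzero integers n and integers j ≥ 0, together with (1 + (π/2)‖ξ‖²)^{1/2} / ((π/2)‖ξ‖²) for all ξ ∈ Λ \ {0}, equals max{ (1 + πd/(2c) + π²/(4c²))^{1/2} / ((π/(2c))(d - |α|)), (1 + (π/2)‖ξ₀‖²)^{1/2} / ((π/2)‖ξ₀‖²) }. -/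
open Real

lemma rpow_half_div (x v : ℝ) (hx : 0 ≤ x) (hv : 0 < v) :
    x ^ ((1:ℝ)/2) / v = (x / v ^ 2) ^ ((1:ℝ)/2) := by
  rw [Real.div_rpow hx (sq_nonneg v)]
  congr 1
  rw [← Real.rpow_natCast v 2, ← Real.rpow_mul hv.le]
  norm_num

lemma ratio_mono (u v : ℝ) (hu : 0 < u) (huv : u ≤ v) :
    (1 + v) ^ ((1:ℝ)/2) / v ≤ (1 + u) ^ ((1:ℝ)/2) / u := by
  have hv : 0 < v := lt_of_lt_of_le hu huv
  rw [rpow_half_div _ _ (by linarith) hv, rpow_half_div _ _ (by linarith) hu]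
  apply Real.rpow_le_rpow (by positivity) _ (by norm_num)
  rw [div_le_div_iff₀ (by positivity) (by positivity)]
  nlinarith [sq_nonneg u, sq_nonneg v, mul_le_mul_of_nonneg_left huv hu.le]

lemma key_ineq (a d m k β t : ℝ) (ha : 0 < a) (hm : 1 ≤ m) (hβ : 0 ≤ β)
    (hβd : β < d) (hdk : d ≤ k) (ht : t ≤ β) :
    (1 + a * m * k + a ^ 2 * m ^ 2) ^ ((1:ℝ)/2) / (a * m * (k - t)) ≤
      (1 + a * d + a ^ 2) ^ ((1:ℝ)/2) / (a * (d - β)) := by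
  have hd : 0 < d := lt_of_le_of_lt hβ hβd
  have hm0 : 0 < m := lt_of_lt_of_le one_pos hm
  have hk : 0 < k := lt_of_lt_of_le hd hdk
  have hkβ : 0 < k - β := by linarith
  have hnum : (0:ℝ) ≤ 1 + a * m * k + a ^ 2 * m ^ 2 := by
    nlinarith [mul_pos (mul_pos ha hm0) hk, sq_nonneg (a * m)]
  have hnum0 : (0:ℝ) ≤ 1 + a * d + a ^ 2 := by nlinarith [mul_pos ha hd, sq_nonneg a]
  have step1 : (1 + a * m * k + a ^ 2 * m ^ 2) ^ ((1:ℝ)/2) / (a * m * (k - t)) ≤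
      (1 + a * m * k + a ^ 2 * m ^ 2) ^ ((1:ℝ)/2) / (a * m * (k - β)) := by
    apply div_le_div_of_nonneg_left (Real.rpow_nonneg hnum _) (by positivity)
    have h : k - β ≤ k - t := by linarith
    exact mul_le_mul_of_nonneg_left h (by positivity)
  refine le_trans step1 ?_
  rw [rpow_half_div _ _ hnum (by positivity), rpow_half_div _ _ hnum0 (mul_pos ha (by linarith))]
  apply Real.rpow_le_rpow (by positivity) _ (by norm_num)
  rw [div_le_div_iff₀ (by positivity) (pow_pos (mul_pos ha (by linarith)) 2)]
  have h01 : d - β ≤ m * (k - β) := by nlinarith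
  have A1 : (d - β) ^ 2 ≤ m ^ 2 * (k - β) ^ 2 := by
    have := pow_le_pow_left₀ (by linarith : (0:ℝ) ≤ d - β) h01 2
    calc (d - β) ^ 2 ≤ (m * (k - β)) ^ 2 := this
      _ = m ^ 2 * (k - β) ^ 2 := by ring
  have hdkβ : (0:ℝ) ≤ d * k - β ^ 2 := by nlinarith
  have A2' : k * (d - β) ^ 2 ≤ d * (k - β) ^ 2 := by
    nlinarith [mul_nonneg (by linarith : (0:ℝ) ≤ k - d) hdkβ]
  have A2 : k * (d - β) ^ 2 ≤ d * (m * (k - β) ^ 2) := by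
    nlinarith [mul_nonneg (mul_nonneg (by linarith : (0:ℝ) ≤ m - 1) hd.le) (sq_nonneg (k - β))]
  have A3 : (d - β) ^ 2 ≤ (k - β) ^ 2 := by nlinarith
  nlinarith [mul_le_mul_of_nonneg_left A1 (by positivity : (0:ℝ) ≤ a ^ 2),
    mul_le_mul_of_nonneg_left A2 (by positivity : (0:ℝ) ≤ a ^ 3 * m),
    mul_le_mul_of_nonneg_left A3 (by positivity : (0:ℝ) ≤ a ^ 4 * m ^ 2)]

/-- Sharp Sobolev constant for the Green operator `G_α`, `-d < α < d`: the supremum of the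
eigenvalue ratios `(1 + μ_ℓ)^{1/2} / λ_ℓ` is the maximum of the values at `(n, j) = (∓1, 0)`
and at a shortest nonzero lattice vector `ξ₀`. -/
theorem sharp_constant_interior (d : ℕ) (hd : 0 < d) (c : ℝ) (hc : 0 < c)
    (α : ℝ) (hα : -(d : ℝ) < α) (hα' : α < d)
    (Λ : AddSubgroup (EuclideanSpace ℝ (Fin (2 * d))))
    (hdisc : DiscreteTopology Λ)
    (hspan : Submodule.span ℝ (Λ : Set (EuclideanSpace ℝ (Fin (2 * d)))) = ⊤)
    (ξ₀ : Λ) (hξ₀ : ξ₀ ≠ 0)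
    (hmin : ∀ ξ : Λ, ξ ≠ 0 →
      ‖((ξ₀ : Λ) : EuclideanSpace ℝ (Fin (2 * d)))‖ ≤ ‖((ξ : Λ) : EuclideanSpace ℝ (Fin (2 * d)))‖) :
    IsLUB
      ((Set.range fun p : {n : ℤ // n ≠ 0} × ℕ =>
          (1 + π * |((p.1 : ℤ) : ℝ)| / (2 * c) * ((d : ℝ) + 2 * p.2) +
              π ^ 2 / (4 * c ^ 2) * ((p.1 : ℤ) : ℝ) ^ 2) ^ ((1 : ℝ) / 2) /
            (π * |((p.1 : ℤ) : ℝ)| / (2 * c) *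
              ((d : ℝ) + 2 * p.2 - α * ((p.1 : ℤ).sign : ℝ)))) ∪
        (Set.range fun ξ : {x : Λ // x ≠ 0} =>
          (1 + π / 2 * ‖((ξ : Λ) : EuclideanSpace ℝ (Fin (2 * d)))‖ ^ 2) ^ ((1 : ℝ) / 2) /
            (π / 2 * ‖((ξ : Λ) : EuclideanSpace ℝ (Fin (2 * d)))‖ ^ 2)))
      (max
        ((1 + π / (2 * c) * d + π ^ 2 / (4 * c ^ 2)) ^ ((1 : ℝ) / 2) /
          (π / (2 * c) * ((d : ℝ) - |α|)))
        ((1 + π / 2 * ‖((ξ₀ : Λ) : EuclideanSpace ℝ (Fin (2 * d)))‖ ^ 2) ^ ((1 : ℝ) / 2) /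
          (π / 2 * ‖((ξ₀ : Λ) : EuclideanSpace ℝ (Fin (2 * d)))‖ ^ 2))) := by
  have hβd : |α| < (d : ℝ) := abs_lt.mpr ⟨hα, hα'⟩
  have hξ0 : (0:ℝ) < ‖((ξ₀ : Λ) : EuclideanSpace ℝ (Fin (2 * d)))‖ := by
    rw [norm_pos_iff]
    exact fun h => hξ₀ (by exact_mod_cast Subtype.ext h)
  constructor
  · rintro x (⟨⟨⟨n, hn⟩, j⟩, rfl⟩ | ⟨⟨ξ, hξ⟩, rfl⟩)
    · refine le_max_of_le_left ?_
      simp only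
      set m : ℝ := |((n : ℤ) : ℝ)| with hm_def
      have hm : (1:ℝ) ≤ m := by
        rw [hm_def, ← Int.cast_abs]
        exact_mod_cast Int.one_le_abs hn
      have hs1 : |(((n : ℤ).sign : ℤ) : ℝ)| = 1 := by
        rcases lt_or_gt_of_ne hn with h | h
        · rw [Int.sign_eq_neg_one_of_neg h]; norm_num
        · rw [Int.sign_eq_one_of_pos h]; norm_num
      have hsle : α * (((n : ℤ).sign : ℤ) : ℝ) ≤ |α| := by
        calc α * _ ≤ |α * _| := le_abs_self _
          _ = |α| * |(((n : ℤ).sign : ℤ) : ℝ)| := abs_mul _ _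
          _ = |α| := by rw [hs1, mul_one]
      have key := key_ineq (π / (2 * c)) (d : ℝ) m ((d : ℝ) + 2 * j) (|α|) (α * (((n : ℤ).sign : ℤ) : ℝ))
        (by positivity) hm (abs_nonneg α) hβd (le_add_of_nonneg_right (by positivity)) hsle
      calc (1 + π * m / (2 * c) * ((d : ℝ) + 2 * j) +
              π ^ 2 / (4 * c ^ 2) * ((n : ℤ) : ℝ) ^ 2) ^ ((1 : ℝ) / 2) /
            (π * m / (2 * c) * ((d : ℝ) + 2 * j - α * (((n : ℤ).sign : ℤ) : ℝ)))
          = (1 + π / (2 * c) * m * ((d : ℝ) + 2 * j) +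
              (π / (2 * c)) ^ 2 * m ^ 2) ^ ((1 : ℝ) / 2) /
            (π / (2 * c) * m * (((d : ℝ) + 2 * j) - α * (((n : ℤ).sign : ℤ) : ℝ))) := by
            rw [show (1 + π * m / (2 * c) * ((d : ℝ) + 2 * j) +
              π ^ 2 / (4 * c ^ 2) * ((n : ℤ) : ℝ) ^ 2) = (1 + π / (2 * c) * m * ((d : ℝ) + 2 * j) +
              (π / (2 * c)) ^ 2 * m ^ 2) from by rw [hm_def, sq_abs]; ring]
            ring_nf
        _ ≤ (1 + π / (2 * c) * (d : ℝ) + (π / (2 * c)) ^ 2) ^ ((1 : ℝ) / 2) /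
            (π / (2 * c) * ((d : ℝ) - |α|)) := key
        _ = (1 + π / (2 * c) * d + π ^ 2 / (4 * c ^ 2)) ^ ((1 : ℝ) / 2) /
            (π / (2 * c) * ((d : ℝ) - |α|)) := by
            rw [show (1 + π / (2 * c) * (d : ℝ) + (π / (2 * c)) ^ 2) =
              (1 + π / (2 * c) * (d : ℝ) + π ^ 2 / (4 * c ^ 2)) from by ring]
    · refine le_max_of_le_right ?_
      simp only
      have hle : ‖((ξ₀ : Λ) : EuclideanSpace ℝ (Fin (2 * d)))‖ ≤
          ‖((ξ : Λ) : EuclideanSpace ℝ (Fin (2 * d)))‖ := hmin ξ hξ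
      exact ratio_mono _ _ (by positivity) (mul_le_mul_of_nonneg_left (pow_le_pow_left₀ (norm_nonneg _) hle 2) (by positivity))
  · intro b hb
    refine max_le ?_ (hb (Or.inr ⟨⟨ξ₀, hξ₀⟩, rfl⟩))
    rcases le_or_gt 0 α with h | h
    · have hmem := hb (Or.inl ⟨(⟨1, one_ne_zero⟩, 0), rfl⟩)
      refine le_trans (le_of_eq ?_) hmem
      simp only [Int.sign_one]
      rw [abs_of_nonneg h]
      norm_num
    · have hmem := hb (Or.inl ⟨(⟨-1, by norm_num⟩, 0), rfl⟩)
      refine le_trans (le_of_eq ?_) hmem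
      rw [abs_of_neg h]
      norm_num
end

section
/- Let d be a positive integer, c > 0 a real number, Λ a full-rank ℤ-lattice in ℝ^{2d}, and ξ₀ a nonzero element of Λ of minimal Euclidean norm. Then the supremum of the family of real numbers consisting of (1 + (π|n|/(2c))(d + 2j) + (π²/(4c²))n²)^{1/2} / ((π|n|/(2c))(d + 2j - d·sgn(n))) for all pairs (n, j) with n a nonzero integer and j ≥ 0 an integer excluding the pairs with j = 0 and n > 0, together with (1 + (π/2)‖ξ‖²)^{1/2} / ((π/2)‖ξ‖²) for all ξ ∈ Λ \ {0}, equals max{ (1 + (π/(2c))(d + 2) + π²/(4c²))^{1/2} / (π/c), (1 + (π/2)‖ξ₀‖²)^{1/2} / ((π/2)‖ξ₀‖²) }. -/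
open Real

lemma sqrt_ratio_anti {u v : ℝ} (hu : 0 < u) (huv : u ≤ v) :
    (1 + v) ^ ((1:ℝ)/2) / v ≤ (1 + u) ^ ((1:ℝ)/2) / u := by
  have hv : 0 < v := hu.trans_le huv
  rw [← Real.sqrt_eq_rpow, ← Real.sqrt_eq_rpow, div_le_div_iff₀ hv hu]
  have e1 : Real.sqrt (1+v) * u = Real.sqrt ((1+v) * u^2) := by
    rw [Real.sqrt_mul (by positivity), Real.sqrt_sq hu.le]
  have e2 : Real.sqrt (1+u) * v = Real.sqrt ((1+u) * v^2) := by
    rw [Real.sqrt_mul (by positivity), Real.sqrt_sq hv.le]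
  rw [e1, e2]
  have key : (1+v) * u^2 ≤ (1+u) * v^2 := by
    nlinarith [mul_nonneg (sub_nonneg.2 huv) (by positivity : (0:ℝ) ≤ u + v + u*v)]
  exact Real.sqrt_le_sqrt key

lemma core_ineq {A m k s D : ℝ} (hA : 0 < A) (hm : 1 ≤ m) (hk : 2 ≤ k) (hD : 1 ≤ D)
    (hs : 0 ≤ s) (hsk : s ≤ k + D) :
    (1 + A*m*s + A^2*m^2) ^ ((1:ℝ)/2) / (A*m*k) ≤ (1 + A*(D+2) + A^2) ^ ((1:ℝ)/2) / (2*A) := by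
  have hm0 : (0:ℝ) < m := lt_of_lt_of_le one_pos hm
  have hk0 : (0:ℝ) < k := lt_of_lt_of_le two_pos hk
  have hD0 : (0:ℝ) < D := lt_of_lt_of_le one_pos hD
  have h1 : (0:ℝ) < A*m*k := by positivity
  have h2 : (0:ℝ) < 2*A := by positivity
  have hN1 : (0:ℝ) ≤ 1 + A*m*s + A^2*m^2 := by positivity
  have hN2 : (0:ℝ) ≤ 1 + A*(D+2) + A^2 := by positivity
  rw [← Real.sqrt_eq_rpow, ← Real.sqrt_eq_rpow, div_le_div_iff₀ h1 h2]
  have e1 : Real.sqrt (1 + A*m*s + A^2*m^2) * (2*A) = Real.sqrt ((1 + A*m*s + A^2*m^2) * (2*A)^2) := by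
    rw [Real.sqrt_mul hN1, Real.sqrt_sq h2.le]
  have e2 : Real.sqrt (1 + A*(D+2) + A^2) * (A*m*k) = Real.sqrt ((1 + A*(D+2) + A^2) * (A*m*k)^2) := by
    rw [Real.sqrt_mul hN2, Real.sqrt_sq h1.le]
  rw [e1, e2]
  apply Real.sqrt_le_sqrt
  have hk2 : 4 ≤ k^2 := by nlinarith [mul_nonneg (sub_nonneg.2 hk) (by linarith : (0:ℝ) ≤ k + 2)]
  have hmk : 2 ≤ m*k := by nlinarith [mul_nonneg (sub_nonneg.2 hm) (sub_nonneg.2 hk)]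
  have f1 : 4 ≤ m^2*k^2 := by
    nlinarith [mul_nonneg (sub_nonneg.2 hmk) (by linarith : (0:ℝ) ≤ m*k + 2)]
  have f2 : 4*s ≤ k^2*(D+2) := by
    nlinarith [mul_nonneg hD0.le (by linarith : (0:ℝ) ≤ k^2 - 4),
      mul_nonneg hk0.le (sub_nonneg.2 hk)]
  have f3 : 4*(m*s) ≤ m^2*(k^2*(D+2)) := by
    nlinarith [mul_le_mul_of_nonneg_left f2 hm0.le,
      mul_le_mul_of_nonneg_right hm (by positivity : (0:ℝ) ≤ m*(k^2*(D+2)))]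
  nlinarith [mul_le_mul_of_nonneg_left f1 (by positivity : (0:ℝ) ≤ A^2),
    mul_le_mul_of_nonneg_left f3 (by positivity : (0:ℝ) ≤ A^3),
    mul_nonneg (by positivity : (0:ℝ) ≤ A^4*m^2) (sub_nonneg.2 hk2)]

lemma A_le_aux (d : ℕ) (hd : 0 < d) (c : ℝ) (hc : 0 < c) (m k s : ℝ)
    (hm : 1 ≤ m) (hk : 2 ≤ k) (hs : 0 ≤ s) (hsk : s ≤ k + d) :
    (1 + π * m / (2*c) * s + π^2/(4*c^2) * m^2) ^ ((1:ℝ)/2) / (π * m / (2*c) * k)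
      ≤ (1 + π/(2*c)*((d:ℝ)+2) + π^2/(4*c^2)) ^ ((1:ℝ)/2) / (π/c) := by
  have hπ := Real.pi_pos
  have hD : 1 ≤ (d:ℝ) := by exact_mod_cast hd
  have e1 : π/c = 2*(π/(2*c)) := by ring
  have e2 : π^2/(4*c^2) = (π/(2*c))^2 := by field_simp; ring
  have e4 : π * m / (2*c) * s = (π/(2*c))*m*s := by ring
  have e3 : π*m/(2*c) = (π/(2*c))*m := by ring
  rw [e1, e4, e2, e3]
  exact core_ineq (by positivity) hm hk hD hs hsk

/-- Sharp Sobolev constant for the Green operator in the boundary case `α = d`: pairs with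
`j = 0` and `n > 0` (the zero eigenvalues of `L_d`) are excluded, and the supremum of the
remaining eigenvalue ratios is the maximum of the value at `(n, j) = (1, 1)` (equivalently
`(-1, 0)` after simplification is dominated) and the value at a shortest nonzero lattice
vector `ξ₀`. -/
theorem sharp_constant_boundary (d : ℕ) (hd : 0 < d) (c : ℝ) (hc : 0 < c)
    (Λ : AddSubgroup (EuclideanSpace ℝ (Fin (2 * d))))
    (hdisc : DiscreteTopology Λ)
    (hspan : Submodule.span ℝ (Λ : Set (EuclideanSpace ℝ (Fin (2 * d)))) = ⊤)
    (ξ₀ : Λ) (hξ₀ : ξ₀ ≠ 0)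
    (hmin : ∀ ξ : Λ, ξ ≠ 0 →
      ‖((ξ₀ : Λ) : EuclideanSpace ℝ (Fin (2 * d)))‖ ≤ ‖((ξ : Λ) : EuclideanSpace ℝ (Fin (2 * d)))‖) :
    IsLUB
      ((Set.range fun p : {q : ℤ × ℕ // q.1 ≠ 0 ∧ ¬(q.2 = 0 ∧ 0 < q.1)} =>
          (1 + π * |((p : ℤ × ℕ).1 : ℝ)| / (2 * c) * ((d : ℝ) + 2 * (p : ℤ × ℕ).2) +
              π ^ 2 / (4 * c ^ 2) * ((p : ℤ × ℕ).1 : ℝ) ^ 2) ^ ((1 : ℝ) / 2) /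
            (π * |((p : ℤ × ℕ).1 : ℝ)| / (2 * c) *
              ((d : ℝ) + 2 * (p : ℤ × ℕ).2 - (d : ℝ) * (((p : ℤ × ℕ).1.sign : ℤ) : ℝ)))) ∪
        (Set.range fun ξ : {x : Λ // x ≠ 0} =>
          (1 + π / 2 * ‖((ξ : Λ) : EuclideanSpace ℝ (Fin (2 * d)))‖ ^ 2) ^ ((1 : ℝ) / 2) /
            (π / 2 * ‖((ξ : Λ) : EuclideanSpace ℝ (Fin (2 * d)))‖ ^ 2)))
      (max
        ((1 + π / (2 * c) * ((d : ℝ) + 2) + π ^ 2 / (4 * c ^ 2)) ^ ((1 : ℝ) / 2) / (π / c))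
        ((1 + π / 2 * ‖((ξ₀ : Λ) : EuclideanSpace ℝ (Fin (2 * d)))‖ ^ 2) ^ ((1 : ℝ) / 2) /
          (π / 2 * ‖((ξ₀ : Λ) : EuclideanSpace ℝ (Fin (2 * d)))‖ ^ 2))) := by
  have hπ := Real.pi_pos
  have hd1 : (1:ℝ) ≤ (d:ℝ) := by exact_mod_cast hd
  have hξ₀n : (0:ℝ) < ‖((ξ₀ : Λ) : EuclideanSpace ℝ (Fin (2 * d)))‖ := by
    rw [norm_pos_iff]
    exact fun h => hξ₀ (by exact_mod_cast Subtype.coe_injective (h.trans (ZeroMemClass.coe_zero Λ).symm))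
  constructor
  · rintro x (⟨p, rfl⟩ | ⟨ξ, rfl⟩)
    · -- eigenvalue family
      obtain ⟨⟨n, j⟩, hn, hnj⟩ := p
      simp only at *
      refine le_trans ?_ (le_max_left _ _)
      have hm : (1:ℝ) ≤ |(n:ℝ)| := by
        rw [← Int.cast_abs]; exact_mod_cast Int.one_le_abs hn
      have hj0 : (0:ℝ) ≤ (j:ℝ) := Nat.cast_nonneg j
      rw [← sq_abs ((n:ℤ):ℝ)]
      rcases lt_or_gt_of_ne hn with hneg | hpos
      · have hsgn : n.sign = -1 := Int.sign_eq_neg_one_of_neg hneg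
        rw [hsgn]
        push_cast
        refine A_le_aux d hd c hc |(n:ℝ)| ((d:ℝ) + 2*(j:ℝ) - (d:ℝ)*(-1)) ((d:ℝ) + 2*(j:ℝ))
          hm (by linarith) (by positivity) (by linarith)
      · have hsgn : n.sign = 1 := Int.sign_eq_one_of_pos hpos
        have hj : 1 ≤ j := Nat.one_le_iff_ne_zero.2 (fun h => hnj ⟨h, hpos⟩)
        have hj1 : (1:ℝ) ≤ (j:ℝ) := by exact_mod_cast hj
        rw [hsgn]
        push_cast
        refine A_le_aux d hd c hc |(n:ℝ)| ((d:ℝ) + 2*(j:ℝ) - (d:ℝ)*1) ((d:ℝ) + 2*(j:ℝ))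
          hm (by linarith) (by positivity) (by linarith)
    · refine le_trans ?_ (le_max_right _ _)
      refine sqrt_ratio_anti (by positivity) ?_
      have h1 := hmin ξ ξ.prop
      have h2 : ‖((ξ₀ : Λ) : EuclideanSpace ℝ (Fin (2 * d)))‖^2
          ≤ ‖(((ξ : {x : Λ // x ≠ 0}) : Λ) : EuclideanSpace ℝ (Fin (2 * d)))‖^2 :=
        pow_le_pow_left₀ (norm_nonneg _) h1 2
      nlinarith
  · rintro b hb
    apply max_le
    · have h := hb (Set.mem_union_left _
        (⟨⟨((1:ℤ), (1:ℕ)), ⟨one_ne_zero, by norm_num⟩⟩, rfl⟩ : _ ∈ Set.range _))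
      refine le_trans (le_of_eq ?_) h
      congr 1
      · congr 1
        norm_num
      · norm_num [Int.sign_one]
        ring
    · exact hb (Set.mem_union_right _ ⟨⟨ξ₀, hξ₀⟩, rfl⟩)
end
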